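/- arXiv:math/0606560 — 6 statements merged into one kernel-verified Lean document; each statement's English description precedes it below -/
import Mathlib

section
/- Let R be a commutative ring and let A, B, C, D be n × n matrices over R with A invertible, such that the 2n × 2n block matrix J = fromBlocks A B C D is symplectic, i.e. J * B₀ * Jᵀ = B₀ where B₀ = fromBlocks 0 1 (−1) 0. Then det J = 1. (This is Liouville's theorem, proved via the block decomposition: det J = det A · det(D − C A⁻¹ B) and D − C A⁻¹ B = (Aᵀ)⁻¹.) -/
open Matrix

/-- Liouville's theorem via block decomposition: a symplectic matrix
`J = fromBlocks A B C D` (so `J B₀ Jᵀ = B₀` for `B₀ = fromBlocks 0 1 (-1) 0`)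
with invertible even-even block `A` has determinant `1`. -/
theorem det_symplectic_eq_one {n : ℕ} {R : Type*} [CommRing R]
    (A B C D : Matrix (Fin n) (Fin n) R) (hA : IsUnit A.det)
    (h : fromBlocks A B C D * fromBlocks 0 1 (-1) 0 * (fromBlocks A B C D)ᵀ =
      fromBlocks 0 1 (-1) 0) :
    (fromBlocks A B C D).det = 1 := by
  haveI := A.invertibleOfIsUnitDet hA
  simp only [Matrix.fromBlocks_multiply, Matrix.fromBlocks_transpose, Matrix.mul_one,
    Matrix.mul_neg, Matrix.mul_zero, Matrix.zero_mul, Matrix.one_mul, 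
    Matrix.neg_mul, zero_add, add_zero, Matrix.fromBlocks_inj] at h
  obtain ⟨h11, h12, h21, h22⟩ := h
  -- h21 : -(D * Aᵀ) + C * Bᵀ = -1  (roughly); h11 : -(B * Aᵀ) + A * Bᵀ = 0
  have hBA : B * Aᵀ = A * Bᵀ := by linear_combination (norm := noncomm_ring) -h11
  have key : (D - C * ⅟A * B) * Aᵀ = 1 := by
    have : C * ⅟A * B * Aᵀ = C * Bᵀ := by
      rw [Matrix.mul_assoc (C * ⅟A), hBA, ← Matrix.mul_assoc, Matrix.mul_assoc C,
        invOf_mul_self, Matrix.mul_one]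
    rw [Matrix.sub_mul, this]
    linear_combination (norm := noncomm_ring) -h21
  have hdet : (D - C * ⅟A * B).det * A.det = 1 := by
    have := congrArg Matrix.det key
    rwa [Matrix.det_mul, Matrix.det_transpose, Matrix.det_one] at this
  rw [Matrix.det_fromBlocks₁₁, mul_comm, hdet]
end

section
/- Let R be a commutative ring and let A, B, C, D be n × n matrices over R. Assume A is invertible, A * Bᵀ = B * Aᵀ, and D * Aᵀ − C * Bᵀ = 1. Then det A · det(D − C * A⁻¹ * B) = 1; equivalently, det A = (det A)² · det(D − C * A⁻¹ * B). (This expresses, at the level of the block formula Ber J = det J₀₀ / det(J₁₁ − J₁₀ J₀₀⁻¹ J₀₁), the theorem that the Berezinian of a canonical transformation of an odd symplectic space equals (det J₀₀)², the square of the determinant of the even–even block; in particular the Berezinian is a polynomial in the matrix entries and a complete square.) -/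
open Matrix

/-- At the level of the block formula `Ber J = det J₀₀ / det (J₁₁ - J₁₀ J₀₀⁻¹ J₀₁)`,
the Berezinian of a canonical transformation of an odd symplectic space equals
`(det J₀₀)²`: under the block relations of a symplectic matrix one has
`det A · det (D - C A⁻¹ B) = 1`, equivalently
`det A = (det A)² · det (D - C A⁻¹ B)`. -/
theorem berezinian_eq_det_sq_blocks {n : ℕ} {R : Type*} [CommRing R]
    (A B C D : Matrix (Fin n) (Fin n) R) (hA : IsUnit A.det)
    (h1 : A * Bᵀ = B * Aᵀ) (h2 : D * Aᵀ - C * Bᵀ = 1) :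
    A.det * (D - C * A⁻¹ * B).det = 1 ∧
      A.det = A.det ^ 2 * (D - C * A⁻¹ * B).det := by
  have hinv : A⁻¹ * A = 1 := nonsing_inv_mul A hA
  have key : (D - C * A⁻¹ * B) * Aᵀ = 1 := by
    calc (D - C * A⁻¹ * B) * Aᵀ
        = D * Aᵀ - C * A⁻¹ * (B * Aᵀ) := by rw [sub_mul, mul_assoc]
      _ = D * Aᵀ - C * A⁻¹ * (A * Bᵀ) := by rw [h1]
      _ = D * Aᵀ - C * Bᵀ := by
          rw [mul_assoc, ← mul_assoc A⁻¹, hinv, one_mul]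
      _ = 1 := h2
  have hdet : (D - C * A⁻¹ * B).det * A.det = 1 := by
    have := congrArg Matrix.det key
    rwa [det_mul, det_transpose, det_one] at this
  have h1' : A.det * (D - C * A⁻¹ * B).det = 1 := by rw [mul_comm]; exact hdet
  refine ⟨h1', ?_⟩
  calc A.det = A.det * 1 := (mul_one _).symm
    _ = A.det * (A.det * (D - C * A⁻¹ * B).det) := by rw [h1']
    _ = A.det ^ 2 * (D - C * A⁻¹ * B).det := by ring
end

section
/- Let R be a commutative ring, Ω an R-module, and d, μ : Ω →ₗ[R] Ω linear endomorphisms with d ∘ d = 0, μ ∘ μ = 0, and d ∘ μ + μ ∘ d = 0. For every r ≥ 0, the image of the relation ∂ᵣ is contained in its kernel: if (a, b) ∈ ∂ᵣ then (b, 0) ∈ ∂ᵣ. -/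
/-- The Ševera differential relations `∂ᵣ` on a module `Ω` equipped with two
anticommuting differentials `d` (de Rham differential) and `μ` (multiplication
by the odd symplectic form `ω`): `∂₀` is the graph of `μ`, and for `r ≥ 1`,
`(a, b) ∈ ∂ᵣ` iff there is a chain `a₁, …, aᵣ` with `μ a = 0`,
`d a + μ a₁ = 0`, …, `d a_{r-2} + μ a_{r-1} = 0` and `d a_{r-1} + μ aᵣ = b`. -/
def severaRel {R : Type*} [CommRing R] {Ω : Type*} [AddCommGroup Ω] [Module R Ω]
    (d μ : Ω →ₗ[R] Ω) : ℕ → Set (Ω × Ω)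
  | 0 => {p | p.2 = μ p.1}
  | (k + 1) => {p | ∃ c : ℕ → Ω, c 0 = p.1 ∧ μ p.1 = 0 ∧
      (∀ i < k, d (c i) + μ (c (i + 1)) = 0) ∧ d (c k) + μ (c (k + 1)) = p.2}

/-- `Im ∂ᵣ ⊆ Ker ∂ᵣ`: if `(a, b) ∈ ∂ᵣ` then `(b, 0) ∈ ∂ᵣ`, for every `r ≥ 0`. -/
theorem severaRel_im_subset_ker
    {R : Type*} [CommRing R] {Ω : Type*} [AddCommGroup Ω] [Module R Ω]
    (d μ : Ω →ₗ[R] Ω) (hd : d ∘ₗ d = 0) (hμ : μ ∘ₗ μ = 0)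
    (hdμ : d ∘ₗ μ + μ ∘ₗ d = 0) (r : ℕ) (a b : Ω)
    (hab : (a, b) ∈ severaRel d μ r) : (b, 0) ∈ severaRel d μ r := by
  have hd' : ∀ x, d (d x) = 0 := fun x => by
    simpa using LinearMap.congr_fun hd x
  have hμ' : ∀ x, μ (μ x) = 0 := fun x => by
    simpa using LinearMap.congr_fun hμ x
  have hdμ' : ∀ x, d (μ x) + μ (d x) = 0 := fun x => by
    simpa using LinearMap.congr_fun hdμ x
  cases r with
  | zero =>
    simp only [severaRel, Set.mem_setOf_eq] at hab ⊢
    subst hab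
    exact (hμ' a).symm
  | succ k =>
    obtain ⟨c, hc0, hμa, hchain, hlast⟩ := hab
    dsimp only at hc0 hμa hlast
    have hdμck : d (μ (c k)) = 0 := by
      cases k with
      | zero => rw [hc0, hμa, map_zero]
      | succ m =>
        have h := hchain m (Nat.lt_succ_self m)
        have h2 : μ (c (m + 1)) = -(d (c m)) :=
          eq_neg_of_add_eq_zero_left (by rwa [add_comm] at h)
        rw [h2, map_neg, hd', neg_zero]
    have hμdck : μ (d (c k)) = 0 := by
      have := hdμ' (c k)
      rw [hdμck, zero_add] at this
      exact this
    have hμb : μ b = 0 := by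
      rw [← hlast, map_add, hμdck, hμ', add_zero]
    have key : ∀ i : ℕ,
        d (if i = 0 then b else if i = 1 then d (c (k + 1)) else 0) +
          μ (if i + 1 = 0 then b else if i + 1 = 1 then d (c (k + 1)) else 0) = 0 := by
      intro i
      match i with
      | 0 =>
        have hdb : d b = d (μ (c (k + 1))) := by
          rw [← hlast, map_add, hd', zero_add]
        simpa [hdb] using hdμ' (c (k + 1))
      | 1 => simp [hd']
      | (n + 2) => simp
    exact ⟨fun i => if i = 0 then b else if i = 1 then d (c (k + 1)) else 0,
      by simp, hμb, fun i _ => key i, key k⟩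
end

section
/- Let R be a commutative ring, Ω an R-module, and d, μ : Ω →ₗ[R] Ω linear endomorphisms with d ∘ d = 0, μ ∘ μ = 0, and d ∘ μ + μ ∘ d = 0. For every r ≥ 1, the indeterminancy of the relation ∂ᵣ equals the image of ∂_{r−1}: Ind ∂ᵣ = Im ∂_{r−1}. -/
/-- `Ind ∂ᵣ = Im ∂_{r-1}` for every `r ≥ 1`: the indeterminancy of the relation
`∂ᵣ` equals the image of the previous relation. -/
theorem severaRel_ind_eq_im
    {R : Type*} [CommRing R] {Ω : Type*} [AddCommGroup Ω] [Module R Ω]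
    (d μ : Ω →ₗ[R] Ω) (hd : d ∘ₗ d = 0) (hμ : μ ∘ₗ μ = 0)
    (hdμ : d ∘ₗ μ + μ ∘ₗ d = 0) (r : ℕ) (hr : 1 ≤ r) :
    {b : Ω | ((0 : Ω), b) ∈ severaRel d μ r} =
      {b : Ω | ∃ a : Ω, (a, b) ∈ severaRel d μ (r - 1)} := by
  obtain ⟨k, rfl⟩ : ∃ k, r = k + 1 := ⟨r - 1, by omega⟩
  simp only [Nat.add_sub_cancel]
  ext b
  cases k with
  | zero =>
    simp only [severaRel, Set.mem_setOf_eq]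
    constructor
    · rintro ⟨c, hc0, -, -, hb⟩
      exact ⟨c 1, by rw [← hb, hc0, map_zero, zero_add]⟩
    · rintro ⟨a, ha⟩
      exact ⟨fun i => if i = 0 then 0 else a, rfl, map_zero μ,
        fun i hi => absurd hi (Nat.not_lt_zero i), by simp [ha]⟩
  | succ m =>
    simp only [severaRel, Set.mem_setOf_eq]
    constructor
    · rintro ⟨c, hc0, -, hch, hb⟩
      have h1 : μ (c 1) = 0 := by
        have := hch 0 (Nat.succ_pos m)
        rwa [hc0, map_zero, zero_add] at this
      exact ⟨c 1, fun i => c (i + 1), rfl, h1,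
        fun i hi => hch (i + 1) (by omega), hb⟩
    · rintro ⟨a, c, hc0, hμa, hch, hb⟩
      refine ⟨fun i => match i with | 0 => 0 | j + 1 => c j, rfl, map_zero μ,
        fun i hi => ?_, hb⟩
      match i with
      | 0 => simpa [hc0] using hμa
      | j + 1 => exact hch j (by omega)
end

section
/- Let R be a commutative ring, Ω an R-module, and d, μ : Ω →ₗ[R] Ω linear endomorphisms with d ∘ d = 0, μ ∘ μ = 0, and d ∘ μ + μ ∘ d = 0. For every r ≥ 0, the relation ∂ᵣ is a linear relation, i.e. the set ∂ᵣ ⊆ Ω × Ω is a submodule of Ω × Ω; consequently ∂ᵣ induces a well-defined map dᵣ on the quotient Eᵣ := Ker ∂_{r−1} / Im ∂_{r−1}: if (a, b) ∈ ∂ᵣ and (a′, b′) ∈ ∂ᵣ with a − a′ ∈ Im ∂_{r−1}, then b − b′ ∈ Im ∂_{r−1}. -/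
/-- `Im ∂_{r-1}`, the image of the previous relation, with the convention
`∂_{-1} := {(a, 0)}`, so that `Im ∂_{-1} = {0}`. -/
def severaImPrev {R : Type*} [CommRing R] {Ω : Type*} [AddCommGroup Ω] [Module R Ω]
    (d μ : Ω →ₗ[R] Ω) : ℕ → Set Ω
  | 0 => {0}
  | (k + 1) => {b | ∃ a, (a, b) ∈ severaRel d μ k}

/-- For every `r ≥ 0`, the relation `∂ᵣ` is a linear relation (a submodule of
`Ω × Ω`); consequently it induces a well-defined map `dᵣ` on the quotient
`Eᵣ = Ker ∂_{r-1} / Im ∂_{r-1}`: if `(a, b) ∈ ∂ᵣ`, `(a', b') ∈ ∂ᵣ` and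
`a - a' ∈ Im ∂_{r-1}`, then `b - b' ∈ Im ∂_{r-1}`. -/
theorem severaRel_isLinear_and_descends
    {R : Type*} [CommRing R] {Ω : Type*} [AddCommGroup Ω] [Module R Ω]
    (d μ : Ω →ₗ[R] Ω) (hd : d ∘ₗ d = 0) (hμ : μ ∘ₗ μ = 0)
    (hdμ : d ∘ₗ μ + μ ∘ₗ d = 0) :
    (∀ r : ℕ, ∃ S : Submodule R (Ω × Ω), (S : Set (Ω × Ω)) = severaRel d μ r) ∧
      (∀ r : ℕ, ∀ a b a' b' : Ω, (a, b) ∈ severaRel d μ r →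
        (a', b') ∈ severaRel d μ r → a - a' ∈ severaImPrev d μ r →
        b - b' ∈ severaImPrev d μ r) := by
  have hdd : ∀ x, d (d x) = 0 := fun x => by
    have := LinearMap.ext_iff.mp hd x; simpa using this
  have hanti : ∀ x, d (μ x) = - μ (d x) := fun x => by
    have := LinearMap.ext_iff.mp hdμ x
    simp only [LinearMap.add_apply, LinearMap.comp_apply, LinearMap.zero_apply] at this
    exact eq_neg_of_add_eq_zero_left this
  have hlin : ∀ r : ℕ, ∃ S : Submodule R (Ω × Ω),
      (S : Set (Ω × Ω)) = severaRel d μ r := by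
    intro r
    rcases r with _ | k
    · refine ⟨μ.graph, ?_⟩
      ext p
      simp [LinearMap.mem_graph_iff, severaRel]
    · refine ⟨{ carrier := severaRel d μ (k + 1)
                add_mem' := ?_
                zero_mem' := ?_
                smul_mem' := ?_ }, rfl⟩
      · rintro p q ⟨c, hc0, hcμ, hcmid, hclast⟩ ⟨c', hc'0, hc'μ, hc'mid, hc'last⟩
        refine ⟨fun i => c i + c' i, by simp [hc0, hc'0], ?_, ?_, ?_⟩
        · rw [Prod.fst_add, map_add, hcμ, hc'μ, add_zero]
        · intro i hi
          simp only [map_add]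
          rw [add_add_add_comm, hcmid i hi, hc'mid i hi, add_zero]
        · simp only [map_add, Prod.snd_add]
          rw [add_add_add_comm, hclast, hc'last]
      · exact ⟨fun _ => 0, rfl, by simp, by simp, by simp⟩
      · rintro t p ⟨c, hc0, hcμ, hcmid, hclast⟩
        refine ⟨fun i => t • c i, by simp [hc0], ?_, ?_, ?_⟩
        · rw [Prod.smul_fst, map_smul, hcμ, smul_zero]
        · intro i hi
          simp only [map_smul, ← smul_add]
          rw [hcmid i hi, smul_zero]
        · simp only [map_smul, ← smul_add, Prod.smul_snd]
          rw [hclast]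
  have key : ∀ r : ℕ, ∀ u v : Ω, (u, v) ∈ severaRel d μ r →
      u ∈ severaImPrev d μ r → v ∈ severaImPrev d μ r := by
    intro r u v huv hu
    rcases r with _ | (_ | m)
    · -- r = 0
      have hv : v = μ u := huv
      have hu0 : u = 0 := hu
      show v ∈ ({0} : Set Ω)
      simp [hv, hu0]
    · -- r = 1
      obtain ⟨c, hc0, hcμ, hcmid, hclast⟩ := huv
      obtain ⟨x, hx⟩ := hu
      have hc0' : c 0 = u := hc0
      have hux : u = μ x := hx
      have hlast' : d (c 0) + μ (c 1) = v := hclast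
      refine ⟨c 1 - d x, ?_⟩
      show v = μ (c 1 - d x)
      rw [← hlast', hc0', hux, hanti x, map_sub]
      abel
    · -- r = m + 2
      obtain ⟨c, hc0, hcμ, hcmid, hclast⟩ := huv
      obtain ⟨x, hx⟩ := hu
      obtain ⟨e, he0, heμ, hemid, helast⟩ := hx
      have hc0' : c 0 = u := hc0
      have helast' : d (e m) + μ (e (m + 1)) = u := helast
      have hclast' : d (c (m + 1)) + μ (c (m + 1 + 1)) = v := hclast
      have hg : ∀ j : ℕ, (if j + 1 = 0 then e (m + 1) else 0) = (0 : Ω) :=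
        fun j => if_neg (Nat.succ_ne_zero j)
      refine ⟨c 1 - d (e (m + 1)),
        fun i => c (i + 1) - d (if i = 0 then e (m + 1) else 0), ?_, ?_, ?_, ?_⟩
      · show c (0 + 1) - d (if (0 : ℕ) = 0 then e (m + 1) else 0)
            = c 1 - d (e (m + 1))
        rw [if_pos rfl]
      · -- μ of the new head vanishes
        have h0 := hcmid 0 (Nat.succ_pos m)
        have h1 : μ (c (0 + 1)) = - d (c 0) := eq_neg_of_add_eq_zero_right h0
        show μ (c 1 - d (e (m + 1))) = 0
        rw [map_sub, show μ (c 1) = - d (c 0) from h1, hc0', ← helast', map_add,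
          hdd, zero_add, hanti, neg_neg, sub_self]
      · intro i hi
        show d (c (i + 1) - d (if i = 0 then e (m + 1) else 0)) +
            μ (c (i + 1 + 1) - d (if i + 1 = 0 then e (m + 1) else 0)) = 0
        rw [hg i, map_zero, sub_zero, map_sub, hdd, sub_zero]
        exact hcmid (i + 1) (by omega)
      · show d (c (m + 1) - d (if m = 0 then e (m + 1) else 0)) +
            μ (c (m + 1 + 1) - d (if m + 1 = 0 then e (m + 1) else 0)) = v
        rw [hg m, map_zero, sub_zero, map_sub, hdd, sub_zero]
        exact hclast'
  refine ⟨hlin, ?_⟩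
  intro r a b a' b' hab hab' hmem
  obtain ⟨S, hS⟩ := hlin r
  have hsub : (a - a', b - b') ∈ severaRel d μ r := by
    rw [← hS] at hab hab' ⊢
    have := S.sub_mem hab hab'
    simpa using this
  exact key r (a - a') (b - b') hsub hmem
end

section
/- Let R be a commutative ring, M an R-module, and W ⊆ M a submodule. Let u, w : Fin n → M with w i ∈ W for every i, let a be an n × n matrix over R, and set v i := (∑_j a i j • u j) + w i. Then in the exterior algebra ⋀ M, the product ι(v 0) * ι(v 1) * ⋯ * ι(v (n−1)) − (det a) • (ι(u 0) * ι(u 1) * ⋯ * ι(u (n−1))) lies in the two-sided ideal of ⋀ M generated by the image ι(W). (This is the computation showing that the top wedge dx¹⋯dxⁿ transforms by det(∂x/∂x′) modulo terms containing the differentials dξ′ of the conjugate variables.) -/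
open Finset in
lemma altmap_matrix_smul {R : Type*} [CommRing R] {M N : Type*} [AddCommGroup M] [Module R M]
    [AddCommGroup N] [Module R N] {n : ℕ} (f : M [⋀^Fin n]→ₗ[R] N)
    (a : Matrix (Fin n) (Fin n) R) (u : Fin n → M) :
    f (fun i => ∑ j, a i j • u j) = a.det • f u := by
  classical
  have h1 : f (fun i => ∑ j, a i j • u j)
      = ∑ r : Fin n → Fin n, f (fun i => a i (r i) • u (r i)) :=
    f.toMultilinearMap.map_sum (g := fun i j => a i j • u j)
  have h2 : ∀ r : Fin n → Fin n, f (fun i => a i (r i) • u (r i))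
      = (∏ i, a i (r i)) • f (u ∘ r) := fun r =>
    f.toMultilinearMap.map_smul_univ (fun i => a i (r i)) (u ∘ r)
  rw [h1]; simp_rw [h2]
  rw [← Finset.sum_subset
      (Finset.filter_subset (fun r : Fin n → Fin n => Function.Bijective r) Finset.univ)
      (fun r _ hr => ?_)]
  · have h3 : ∑ r ∈ Finset.univ.filter (fun r : Fin n → Fin n => Function.Bijective r),
        (∏ i, a i (r i)) • f (u ∘ r)
        = ∑ σ : Equiv.Perm (Fin n), (∏ i, a i (σ i)) • f (u ∘ σ) :=
      Finset.sum_bij (fun p h => Equiv.ofBijective p (Finset.mem_filter.1 h).2)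
        (fun _ _ => Finset.mem_univ _)
        (fun _ _ _ _ h => by injection h)
        (fun b _ => ⟨b, Finset.mem_filter.2 ⟨Finset.mem_univ _, b.bijective⟩,
          Equiv.coe_fn_injective rfl⟩)
        (fun _ _ => rfl)
    rw [h3, ← Matrix.det_transpose, Matrix.det_apply, Finset.sum_smul]
    refine Finset.sum_congr rfl fun σ _ => ?_
    rw [f.map_perm, Units.smul_def, Units.smul_def, ← Int.cast_smul_eq_zsmul R, smul_smul, mul_comm]
    congr 1
    simp [Matrix.transpose_apply, Units.smul_def, zsmul_eq_mul]
  · have hrinj : ¬ Function.Injective r := fun h =>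
      hr (Finset.mem_filter.2 ⟨Finset.mem_univ _, Finite.injective_iff_bijective.1 h⟩)
    rw [Function.not_injective_iff] at hrinj
    obtain ⟨i, j, hij, hne⟩ := hrinj
    rw [f.map_eq_zero_of_eq (u ∘ r) (by simp [hij]) hne, smul_zero]

lemma wedge_sub_mem_span {R : Type*} [CommRing R] {M : Type*} [AddCommGroup M] [Module R M]
    (W : Submodule R M) : ∀ (n : ℕ) (x y : Fin n → M), (∀ i, x i - y i ∈ W) →
    (List.ofFn fun i => ExteriorAlgebra.ι R (x i)).prod -
      (List.ofFn fun i => ExteriorAlgebra.ι R (y i)).prod ∈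
      TwoSidedIdeal.span (⇑(ExteriorAlgebra.ι R) '' (W : Set M)) := by
  intro n
  induction n with
  | zero => intro x y h; simp
  | succ m ih =>
    intro x y h
    rw [List.ofFn_succ, List.ofFn_succ, List.prod_cons, List.prod_cons]
    set P := (List.ofFn fun i => ExteriorAlgebra.ι R (x i.succ)).prod
    set Q := (List.ofFn fun i => ExteriorAlgebra.ι R (y i.succ)).prod
    have key : ExteriorAlgebra.ι R (x 0) * P - ExteriorAlgebra.ι R (y 0) * Q
        = (ExteriorAlgebra.ι R (x 0) - ExteriorAlgebra.ι R (y 0)) * P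
          + ExteriorAlgebra.ι R (y 0) * (P - Q) := by noncomm_ring
    rw [key]
    refine TwoSidedIdeal.add_mem _ (TwoSidedIdeal.mul_mem_right _ _ _ ?_)
      (TwoSidedIdeal.mul_mem_left _ _ _ (ih _ _ fun i => h i.succ))
    exact TwoSidedIdeal.subset_span ⟨x 0 - y 0, h 0, by rw [map_sub]⟩

/-- If `v i = (∑ j, a i j • u j) + w i` with each `w i` in a submodule `W`,
then in the exterior algebra the top wedge `ι (v 0) ⋯ ι (v (n-1))` equals
`det a • ι (u 0) ⋯ ι (u (n-1))` modulo the two-sided ideal generated by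
`ι(W)` — the computation showing that `dx¹ ⋯ dxⁿ` transforms by
`det (∂x/∂x')` modulo terms containing the conjugate differentials `dξ'`. -/
theorem wedge_transform_det_mod_ideal
    {R : Type*} [CommRing R] {M : Type*} [AddCommGroup M] [Module R M]
    {n : ℕ} (W : Submodule R M) (u w : Fin n → M) (hw : ∀ i, w i ∈ W)
    (a : Matrix (Fin n) (Fin n) R) (v : Fin n → M)
    (hv : ∀ i, v i = (∑ j, a i j • u j) + w i) :
    (List.ofFn fun i => ExteriorAlgebra.ι R (v i)).prod -
        a.det • (List.ofFn fun i => ExteriorAlgebra.ι R (u i)).prod ∈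
      TwoSidedIdeal.span (⇑(ExteriorAlgebra.ι R) '' (W : Set M)) := by
  have hdet : a.det • (List.ofFn fun i => ExteriorAlgebra.ι R (u i)).prod
      = (List.ofFn fun i => ExteriorAlgebra.ι R ((∑ j, a i j • u j))).prod := by
    have := altmap_matrix_smul (ExteriorAlgebra.ιMulti R n) a u
    rw [ExteriorAlgebra.ιMulti_apply, ExteriorAlgebra.ιMulti_apply] at this
    exact this.symm
  rw [hdet]
  exact wedge_sub_mem_span W n v _ (fun i => by rw [hv i]; simpa using hw i)
end
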